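/- arXiv:1204.1933 — 6 statements merged into one kernel-verified Lean document; each statement's English description precedes it below -/
import Mathlib

section
/- For every λ > 0 and every bounded polytope P in the space of real symmetric N×N matrices (i.e., P is a bounded intersection of finitely many closed halfspaces), there exists a finite set E of nonzero integer vectors in ℤ^N such that the intersection of the Ryshkov set R_λ with P equals {G ∈ P : eᵀGe ≥ λ for all e ∈ E}. In other words, R_λ is a locally finite polytope: only finitely many of its defining inequalities are active on any bounded polytope. -/
open Matrix

/-- The quadratic form `eᵀ G e` evaluated at an integer vector `e`. -/
def intQuadForm {N : ℕ} (G : Matrix (Fin N) (Fin N) ℝ) (e : Fin N → ℤ) : ℝ :=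
  (fun i => (e i : ℝ)) ⬝ᵥ G.mulVec fun i => (e i : ℝ)

/-- The Ryshkov polytope `R_λ`: real symmetric `N×N` matrices `G` with
`eᵀGe ≥ λ` for every nonzero integer vector `e`. -/
def Ryshkov (N : ℕ) (lam : ℝ) : Set (Matrix (Fin N) (Fin N) ℝ) :=
  {G | G.IsSymm ∧ ∀ e : Fin N → ℤ, e ≠ 0 → lam ≤ intQuadForm G e}

/-!
Let `G` be symmetric with `xᵀGx ≤ C‖x‖²`, and suppose `eᵀGe ≥ λ` for the integer vectors
`e ≠ 0` with `‖e‖_∞ ≤ 2Kᴺ`. Take a unit eigenvector `v` of the least eigenvalue `μ` of `G`. By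
Dirichlet's simultaneous approximation, `qv = e + r` with `1 ≤ q ≤ Kᴺ`, `e` integral and
`‖r‖_∞ ≤ 1/K`, and then `eᵀGe = μ(q² - 2q⟨v, r⟩) + rᵀGr`. For `K` large in terms of `N`, `C`
and `λ` the last term is at most `λ/2` and `|⟨v, r⟩| ≤ 1/2`, which forces `μ ≥ λ / (4K²ᴺ)`.
Hence every `e` with `‖e‖_∞ > 2Kᴺ` has `eᵀGe ≥ μ‖e‖² ≥ λ`. On a bounded polytope the entries of
`G`, hence `C`, are bounded uniformly, so the finitely many `e` with `0 < ‖e‖_∞ ≤ 2Kᴺ` suffice.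
-/

section

variable {ι : Type*} [Fintype ι]

theorem Matrix.mul_self_apply_le_dotProduct_self (x : ι → ℝ) (i : ι) : x i * x i ≤ x ⬝ᵥ x :=
  Finset.single_le_sum (f := fun j => x j * x j) (fun j _ => mul_self_nonneg (x j))
    (Finset.mem_univ i)

-- Dirichlet's simultaneous approximation theorem.
theorem exists_nat_int_abs_mul_sub_le (v : ι → ℝ) {K : ℕ} (hK : 0 < K) :
    ∃ q : ℕ, 0 < q ∧ q ≤ K ^ Fintype.card ι ∧ ∃ x : ι → ℤ, ∀ i, |q * v i - x i| ≤ 1 / K := by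
  classical
  have hKR : (0 : ℝ) < K := by exact_mod_cast hK
  set f : ℕ → ι → ℤ := fun t i => ⌊Int.fract (t * v i) * K⌋ with hf
  have hmaps : ∀ t ∈ Finset.range (K ^ Fintype.card ι + 1),
      f t ∈ Fintype.piFinset fun _ => Finset.Ico (0 : ℤ) K := by
    intro t _
    simp only [hf, Fintype.mem_piFinset, Finset.mem_Ico, Int.floor_nonneg, Int.floor_lt]
    exact fun i => ⟨by positivity, by push_cast; nlinarith [Int.fract_lt_one (t * v i)]⟩
  have hcard : (Fintype.piFinset fun _ : ι => Finset.Ico (0 : ℤ) K).card <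
      (Finset.range (K ^ Fintype.card ι + 1)).card := by
    simp
  suffices key : ∀ s t, s < t → t ≤ K ^ Fintype.card ι → f s = f t →
      ∃ x : ι → ℤ, ∀ i, |((t - s : ℕ) : ℝ) * v i - x i| ≤ 1 / K by
    obtain ⟨s, hs, t, ht, hne, hst⟩ := Finset.exists_ne_map_eq_of_card_lt_of_maps_to hcard hmaps
    rw [Finset.mem_range, Nat.lt_succ_iff] at hs ht
    rcases hne.lt_or_gt with h | h
    · exact ⟨t - s, by omega, by omega, key s t h ht hst⟩
    · exact ⟨s - t, by omega, by omega, key t s h hs hst.symm⟩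
  intro s t hst _ hfst
  refine ⟨fun i => ⌊t * v i⌋ - ⌊s * v i⌋, fun i => ?_⟩
  have hfract : ((t - s : ℕ) : ℝ) * v i - ((⌊t * v i⌋ - ⌊s * v i⌋ : ℤ) : ℝ) =
      Int.fract (t * v i) - Int.fract (s * v i) := by
    rw [Nat.cast_sub hst.le]; push_cast; unfold Int.fract; ring
  have hlt := Int.abs_sub_lt_one_of_floor_eq_floor (congrFun hfst i).symm
  rw [hfract, le_div_iff₀ hKR, ← abs_of_pos hKR, ← abs_mul, sub_mul]
  exact hlt.le

theorem isCompact_setOf_dotProduct_self_eq_one :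
    IsCompact {x : ι → ℝ | x ⬝ᵥ x = 1} := by
  refine Metric.isCompact_of_isClosed_isBounded (isClosed_eq (by fun_prop) continuous_const)
    ((Metric.isBounded_closedBall (x := 0) (r := 1)).subset fun x hx => ?_)
  rw [mem_closedBall_zero_iff, pi_norm_le_iff_of_nonneg zero_le_one]
  exact fun i => abs_le_one_iff_mul_self_le_one.2 (hx ▸ mul_self_apply_le_dotProduct_self x i)

theorem Matrix.IsSymm.exists_eigenpair_forall_le [Nonempty ι] {G : Matrix ι ι ℝ} (hG : G.IsSymm) :
    ∃ (μ : ℝ) (v : ι → ℝ), v ⬝ᵥ v = 1 ∧ G *ᵥ v = μ • v ∧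
      ∀ x, μ * (x ⬝ᵥ x) ≤ x ⬝ᵥ G *ᵥ x := by
  classical
  obtain ⟨v, hv, hmin⟩ := isCompact_setOf_dotProduct_self_eq_one.exists_isMinOn
    ⟨Pi.single (Classical.arbitrary ι) 1, by simp⟩
    (by fun_prop : Continuous fun x : ι → ℝ => x ⬝ᵥ G *ᵥ x).continuousOn
  set μ := v ⬝ᵥ G *ᵥ v
  have hray (x : ι → ℝ) : μ * (x ⬝ᵥ x) ≤ x ⬝ᵥ G *ᵥ x := by
    rcases eq_or_ne x 0 with rfl | hx
    · simp
    have hpos : 0 < x ⬝ᵥ x := by simpa using dotProduct_star_self_pos_iff.2 hx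
    set c := √(x ⬝ᵥ x)
    have hc : 0 < c := Real.sqrt_pos.2 hpos
    have hcc : c * c = x ⬝ᵥ x := Real.mul_self_sqrt hpos.le
    have hunit : c⁻¹ • x ∈ {x : ι → ℝ | x ⬝ᵥ x = 1} := by
      simp only [Set.mem_ofPred_eq, smul_dotProduct, dotProduct_smul, smul_eq_mul, ← hcc]
      field_simp
    have hmin_x := hmin hunit
    simp only [Set.mem_ofPred_eq, mulVec_smul, smul_dotProduct, dotProduct_smul,
      smul_eq_mul] at hmin_x
    rw [← hcc]
    calc μ * (c * c) ≤ c⁻¹ * (c⁻¹ * (x ⬝ᵥ G *ᵥ x)) * (c * c) := by gcongr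
      _ = x ⬝ᵥ G *ᵥ x := by field_simp
  have hpsd : (G - μ • 1).PosSemidef := by
    refine .of_dotProduct_mulVec_nonneg ((conjTranspose_eq_transpose_of_trivial _).trans
      (hG.sub (isSymm_one.smul μ))) fun x => ?_
    simp only [star_trivial, sub_mulVec, smul_mulVec, one_mulVec, dotProduct_sub,
      dotProduct_smul, smul_eq_mul, sub_nonneg]
    exact hray x
  have hker : (G - μ • 1) *ᵥ v = 0 := by
    refine (hpsd.dotProduct_mulVec_zero_iff v).1 ?_
    simp only [star_trivial, sub_mulVec, smul_mulVec, one_mulVec, dotProduct_sub,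
      dotProduct_smul, smul_eq_mul, Set.mem_ofPred.1 hv, mul_one, sub_self, μ]
  refine ⟨μ, v, hv, ?_, hray⟩
  rwa [sub_mulVec, smul_mulVec, one_mulVec, sub_eq_zero] at hker

theorem Matrix.dotProduct_mulVec_le_of_abs_le {G : Matrix ι ι ℝ} {R : ℝ}
    (hR : ∀ i j, |G i j| ≤ R) (x : ι → ℝ) :
    x ⬝ᵥ G *ᵥ x ≤ Fintype.card ι * R * (x ⬝ᵥ x) := by
  have hterm (i j : ι) : x i * (G i j * x j) ≤ R * ((x i * x i + x j * x j) / 2) := by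
    have hamgm : |x i * x j| ≤ (x i * x i + x j * x j) / 2 := by
      rw [abs_mul]; nlinarith [sq_nonneg (|x i| - |x j|), sq_abs (x i), sq_abs (x j)]
    calc x i * (G i j * x j) ≤ |G i j| * |x i * x j| := by
          rw [← abs_mul]; exact (le_of_eq (by ring)).trans (le_abs_self _)
      _ ≤ R * ((x i * x i + x j * x j) / 2) :=
          mul_le_mul (hR i j) hamgm (abs_nonneg _) ((abs_nonneg _).trans (hR i j))
  calc x ⬝ᵥ G *ᵥ x = ∑ i, ∑ j, x i * (G i j * x j) := by
        simp only [dotProduct, mulVec, Finset.mul_sum]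
    _ ≤ ∑ i : ι, ∑ j : ι, R * ((x i * x i + x j * x j) / 2) :=
        Finset.sum_le_sum fun i _ => Finset.sum_le_sum fun j _ => hterm i j
    _ = Fintype.card ι * R * (x ⬝ᵥ x) := by
        simp only [dotProduct, mul_add, add_div, Finset.sum_add_distrib, Finset.sum_const,
          Finset.card_univ, nsmul_eq_mul, ← Finset.mul_sum, ← Finset.sum_div]
        ring

theorem Matrix.dotProduct_mulVec_eq_of_mulVec_eq_smul {G : Matrix ι ι ℝ} (hG : G.IsSymm) {μ : ℝ}
    {v : ι → ℝ} (hGv : G *ᵥ v = μ • v) (q : ℝ) (r : ι → ℝ) :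
    (q • v - r) ⬝ᵥ G *ᵥ (q • v - r) =
      μ * (q ^ 2 * (v ⬝ᵥ v) - 2 * q * (v ⬝ᵥ r)) + r ⬝ᵥ G *ᵥ r := by
  have hvG : v ᵥ* G = μ • v := by rw [← mulVec_transpose, hG, hGv]
  simp only [mulVec_sub, mulVec_smul, hGv, dotProduct_sub, sub_dotProduct, smul_dotProduct,
    dotProduct_smul, dotProduct_mulVec v G r, hvG, smul_eq_mul, dotProduct_comm r v]
  ring

theorem exists_int_near_nat_smul_of_dotProduct_self_eq_one {v : ι → ℝ} (hv : v ⬝ᵥ v = 1)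
    {K : ℕ} (hK : 4 * Fintype.card ι ≤ (K : ℝ) ^ 2) :
    ∃ (q : ℕ) (x : ι → ℤ) (r : ι → ℝ), 0 < q ∧ q ≤ K ^ Fintype.card ι ∧ x ≠ 0 ∧
      (∀ i, |x i| ≤ 2 * K ^ Fintype.card ι) ∧ (fun i => (x i : ℝ)) = (q : ℝ) • v - r ∧
      r ⬝ᵥ r ≤ Fintype.card ι / (K : ℝ) ^ 2 := by
  set n := Fintype.card ι
  have hn : (1 : ℝ) ≤ n := by
    have : Nonempty ι := by
      by_contra h
      rw [not_nonempty_iff] at h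
      simp [dotProduct] at hv
    exact_mod_cast Fintype.card_pos
  have hK1 : (1 : ℝ) ≤ K := by nlinarith
  obtain ⟨q, hq, hqK, x, hx⟩ := exists_nat_int_abs_mul_sub_le v (K := K) (by exact_mod_cast hK1)
  set r : ι → ℝ := (q : ℝ) • v - fun i => (x i : ℝ) with hr
  have hrr : r ⬝ᵥ r ≤ n / (K : ℝ) ^ 2 := by
    calc r ⬝ᵥ r = ∑ i, |r i| * |r i| := by simp only [dotProduct, abs_mul_abs_self]
      _ ≤ ∑ _i : ι, 1 / (K : ℝ) * (1 / K) :=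
          Finset.sum_le_sum fun i _ => mul_self_le_mul_self (abs_nonneg _) (hx i)
      _ = n / (K : ℝ) ^ 2 := by simp only [Finset.sum_const, Finset.card_univ]; ring
  have hx0 : x ≠ 0 := by
    rintro rfl
    have hrq : r = (q : ℝ) • v := by ext i; simp [hr]
    have hq1 : (1 : ℝ) ≤ q := by exact_mod_cast hq
    rw [hrq, smul_dotProduct, dotProduct_smul, hv, smul_eq_mul, smul_eq_mul, mul_one,
      le_div_iff₀ (by positivity)] at hrr
    nlinarith [mul_le_mul_of_nonneg_right (one_le_mul_of_one_le_of_one_le hq1 hq1)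
      (sq_nonneg (K : ℝ))]
  have hxbd (i : ι) : |x i| ≤ 2 * K ^ n := by
    have hvi : |v i| ≤ 1 :=
      abs_le_one_iff_mul_self_le_one.2 (hv ▸ mul_self_apply_le_dotProduct_self v i)
    have hxi : |(x i : ℝ) - q * v i| ≤ 1 := by
      rw [abs_sub_comm]; exact (hx i).trans (div_le_one_of_le₀ hK1 (by positivity))
    have hqvi : |(q : ℝ) * v i| ≤ (K : ℝ) ^ n := by
      rw [abs_mul, Nat.abs_cast]
      exact (mul_le_of_le_one_right (Nat.cast_nonneg q) hvi).trans (by exact_mod_cast hqK)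
    have hKn : (1 : ℝ) ≤ (K : ℝ) ^ n := one_le_pow₀ hK1
    have : |(x i : ℝ)| ≤ 2 * (K : ℝ) ^ n := by
      linarith [abs_sub_abs_le_abs_sub (x i : ℝ) (q * v i)]
    exact_mod_cast this
  exact ⟨q, x, r, hq, hqK, hx0, hxbd, by rw [hr, sub_sub_cancel], hrr⟩

theorem Matrix.IsSymm.le_mul_eigenvalue_of_forall_abs_le {G : Matrix ι ι ℝ} (hG : G.IsSymm)
    {lam C : ℝ} (hlam : 0 < lam) {K : ℕ} (hK : 4 * Fintype.card ι ≤ (K : ℝ) ^ 2)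
    (hKC : 2 * C * Fintype.card ι ≤ lam * K ^ 2) (hC : ∀ x, x ⬝ᵥ G *ᵥ x ≤ C * (x ⬝ᵥ x))
    (hsmall : ∀ e : ι → ℤ, e ≠ 0 → (∀ i, |e i| ≤ 2 * K ^ Fintype.card ι) →
      lam ≤ (fun i => (e i : ℝ)) ⬝ᵥ G *ᵥ fun i => (e i : ℝ))
    {μ : ℝ} {v : ι → ℝ} (hv : v ⬝ᵥ v = 1) (hGv : G *ᵥ v = μ • v) :
    lam ≤ 4 * ((K : ℝ) ^ Fintype.card ι) ^ 2 * μ := by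
  set n := Fintype.card ι
  obtain ⟨q, x, r, hq, hqK, hx0, hxbd, hxr, hrr⟩ :=
    exists_int_near_nat_smul_of_dotProduct_self_eq_one hv hK
  have hq1 : (1 : ℝ) ≤ q := by exact_mod_cast hq
  have hqK : (q : ℝ) ≤ (K : ℝ) ^ n := by exact_mod_cast hqK
  have hK4 : (4 : ℝ) ≤ (K : ℝ) ^ 2 := by
    obtain ⟨i, -⟩ := Function.ne_iff.1 hx0
    have : (1 : ℝ) ≤ n := by exact_mod_cast Fintype.card_pos_iff.2 ⟨i⟩
    linarith
  have hr0 : 0 ≤ r ⬝ᵥ r := Finset.sum_nonneg fun i _ => mul_self_nonneg (r i)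
  have hrr' : r ⬝ᵥ r ≤ 1 / 4 := by
    refine hrr.trans ?_
    rw [div_le_div_iff₀ (by linarith) (by norm_num)]
    linarith
  have hvr : |v ⬝ᵥ r| ≤ 1 / 2 := by
    have hcs : (v ⬝ᵥ r) ^ 2 ≤ (v ⬝ᵥ v) * (r ⬝ᵥ r) := by
      calc (v ⬝ᵥ r) ^ 2 ≤ (∑ i, v i ^ 2) * ∑ i, r i ^ 2 := Finset.sum_mul_sq_le_sq_mul_sq _ _ _
        _ = (v ⬝ᵥ v) * (r ⬝ᵥ r) := by simp only [dotProduct, sq]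
    exact abs_le_of_sq_le_sq (by nlinarith) (by norm_num)
  have hrGr : r ⬝ᵥ G *ᵥ r ≤ lam / 2 := by
    refine (hC r).trans ?_
    rcases le_or_gt C 0 with hC0 | hC0
    · nlinarith
    · calc C * (r ⬝ᵥ r) ≤ C * (n / (K : ℝ) ^ 2) := by gcongr
        _ ≤ lam / 2 := by
          rw [mul_div_assoc', div_le_div_iff₀ (by linarith) two_pos]
          linarith
  have key := hsmall x hx0 hxbd
  rw [hxr, dotProduct_mulVec_eq_of_mulVec_eq_smul hG hGv, hv, mul_one] at key
  have hs := abs_le.1 hvr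
  have hB0 : 0 ≤ (q : ℝ) ^ 2 - 2 * q * (v ⬝ᵥ r) := by nlinarith
  have hB : (q : ℝ) ^ 2 - 2 * q * (v ⬝ᵥ r) ≤ 2 * (K ^ n) ^ 2 := by nlinarith
  have hμ : 0 < μ := by
    by_contra! hμ
    nlinarith [mul_nonpos_of_nonpos_of_nonneg hμ hB0]
  nlinarith [mul_le_mul_of_nonneg_left hB hμ.le]

theorem Matrix.exists_forall_le_dotProduct_mulVec_of_forall_abs_le (lam C : ℝ) (hlam : 0 < lam) :
    ∃ M : ℕ, ∀ G : Matrix ι ι ℝ, G.IsSymm → (∀ x, x ⬝ᵥ G *ᵥ x ≤ C * (x ⬝ᵥ x)) →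
      (∀ e : ι → ℤ, e ≠ 0 → (∀ i, |e i| ≤ M) →
        lam ≤ (fun i => (e i : ℝ)) ⬝ᵥ G *ᵥ fun i => (e i : ℝ)) →
      ∀ e : ι → ℤ, e ≠ 0 → lam ≤ (fun i => (e i : ℝ)) ⬝ᵥ G *ᵥ fun i => (e i : ℝ) := by
  set n := Fintype.card ι
  obtain ⟨K, hK⟩ := exists_nat_ge (1 + 4 * n + 2 * |C| * n / lam)
  have hCK : 2 * |C| * n ≤ lam * K := by
    have : 2 * |C| * n / lam ≤ K := by linarith [show (0 : ℝ) ≤ 4 * n by positivity]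
    rw [div_le_iff₀ hlam] at this
    linarith
  have hK1 : (1 : ℝ) ≤ K := by linarith [show (0 : ℝ) ≤ 4 * n + 2 * |C| * n / lam by positivity]
  have hK4 : 4 * (n : ℝ) ≤ (K : ℝ) ^ 2 := by
    nlinarith [show (0 : ℝ) ≤ 2 * |C| * n / lam by positivity]
  have hKC : 2 * C * n ≤ lam * (K : ℝ) ^ 2 := by
    have hKK : (K : ℝ) ≤ (K : ℝ) ^ 2 := by nlinarith
    nlinarith [mul_le_mul_of_nonneg_right (le_abs_self C) (Nat.cast_nonneg (α := ℝ) n),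
      mul_le_mul_of_nonneg_left hKK hlam.le]
  refine ⟨2 * K ^ n, fun G hG hC hsmall e he => ?_⟩
  push_cast at hsmall
  by_cases hle : ∀ i, |e i| ≤ 2 * (K : ℤ) ^ n
  · exact hsmall e he hle
  obtain ⟨i, hi⟩ := not_forall.1 hle
  have : Nonempty ι := ⟨i⟩
  obtain ⟨μ, v, hv, hGv, hray⟩ := hG.exists_eigenpair_forall_le
  have hμ := hG.le_mul_eigenvalue_of_forall_abs_le hlam hK4 hKC hC hsmall hv hGv
  have hei : (2 * (K : ℝ) ^ n) ^ 2 ≤ (fun i => (e i : ℝ)) ⬝ᵥ fun i => (e i : ℝ) := by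
    have : 2 * (K : ℝ) ^ n < |(e i : ℝ)| := by exact_mod_cast not_le.1 hi
    nlinarith [mul_self_apply_le_dotProduct_self (fun i => (e i : ℝ)) i, abs_mul_abs_self (e i : ℝ),
      show (0 : ℝ) ≤ 2 * (K : ℝ) ^ n by positivity]
  have hμ0 : 0 ≤ μ := by nlinarith
  calc lam ≤ 4 * ((K : ℝ) ^ n) ^ 2 * μ := hμ
    _ ≤ μ * ((fun i => (e i : ℝ)) ⬝ᵥ fun i => (e i : ℝ)) := by nlinarith
    _ ≤ _ := hray _

end

/-- The Ryshkov set `R_λ` is a locally finite polytope: for every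
bounded polytope `P` in the space of real symmetric `N×N` matrices (a bounded
intersection of finitely many closed halfspaces of that space), there is a
finite set `E` of nonzero integer vectors such that
`R_λ ∩ P = {G ∈ P | eᵀGe ≥ λ for all e ∈ E}`. -/
theorem ryshkov_locally_finite_polytope (N : ℕ) (lam : ℝ) (hlam : 0 < lam)
    (P : Set (Matrix (Fin N) (Fin N) ℝ))
    (k : ℕ) (f : Fin k → (Matrix (Fin N) (Fin N) ℝ →ₗ[ℝ] ℝ)) (b : Fin k → ℝ)
    (hP : P = {G | G.IsSymm ∧ ∀ i : Fin k, f i G ≤ b i})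
    (hbdd : ∃ R : ℝ, ∀ G ∈ P, ∀ i j, |G i j| ≤ R) :
    ∃ E : Finset (Fin N → ℤ), (∀ e ∈ E, e ≠ 0) ∧
      Ryshkov N lam ∩ P = {G ∈ P | ∀ e ∈ E, lam ≤ intQuadForm G e} := by
  obtain ⟨R, hR⟩ := hbdd
  obtain ⟨M, hM⟩ :=
    exists_forall_le_dotProduct_mulVec_of_forall_abs_le (ι := Fin N) lam (N * R) hlam
  have hmem (e : Fin N → ℤ) :
      e ∈ (Finset.Icc (-fun _ => (M : ℤ)) fun _ => (M : ℤ)).erase 0 ↔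
        e ≠ 0 ∧ ∀ i, |e i| ≤ M := by
    simp only [Finset.mem_erase, Finset.mem_Icc, Pi.le_def, Pi.neg_apply, abs_le, forall_and]
  refine ⟨_, fun e he => ((hmem e).1 he).1, Set.ext fun G => ⟨?_, ?_⟩⟩
  · rintro ⟨⟨-, hG⟩, hGP⟩
    exact ⟨hGP, fun e he => hG e ((hmem e).1 he).1⟩
  · rintro ⟨hGP, hG⟩
    have hsymm : G.IsSymm := (hP ▸ hGP).1
    have hC := dotProduct_mulVec_le_of_abs_le (hR G hGP)
    rw [Fintype.card_fin] at hC
    exact ⟨⟨hsymm, hM G hsymm hC fun e he hbd => hG e ((hmem e).2 ⟨he, hbd⟩)⟩, hGP⟩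
end

section
/- Every matrix in the Ryshkov polytope R_λ with λ > 0 is positive definite: if G is a real symmetric N×N matrix with eᵀGe ≥ λ for all nonzero integer vectors e ∈ ℤ^N, then xᵀGx > 0 for all nonzero real vectors x ∈ ℝ^N. -/
/-!
Let `q v = vᵀ G v`. By pigeonhole (here: compactness of the cube `[0, 1]^N`), every real vector
`x` has a multiple `m • x`, `m ≥ 1`, within any prescribed distance of an integer vector `e`.
Writing `e = m • x + v` with `v` small, `q e = m² q x + m c v + q v` with `c` linear.
If `q x < 0`, the term `m² q x` dominates and `q e < 0`, which is impossible; so `q ≥ 0`.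
If then `q x = 0` with `x ≠ 0`, positive semidefiniteness gives `G x = 0`, so `q e = q v` is
smaller than `λ` while `e ≠ 0`.
-/

open Matrix

variable {ι : Type*} [Fintype ι]

theorem exists_intCast_sub_nat_smul_norm_lt (x : ι → ℝ) {δ : ℝ} (hδ : 0 < δ) :
    ∃ m : ℕ, 0 < m ∧ ∃ e : ι → ℤ, ‖(fun i => (e i : ℝ)) - (m : ℝ) • x‖ < δ := by
  set u : ℕ → ι → ℝ := fun k i => Int.fract (k * x i)
  have hu : ∀ k, u k ∈ Set.Icc 0 1 := fun k =>
    ⟨fun i => Int.fract_nonneg _, fun i => (Int.fract_lt_one _).le⟩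
  obtain ⟨_, -, φ, hφ, hlim⟩ := isCompact_Icc.tendsto_subseq hu
  obtain ⟨K, hK⟩ := Metric.cauchySeq_iff'.1 hlim.cauchySeq δ hδ
  refine ⟨φ (K + 1) - φ K, Nat.sub_pos_of_lt (hφ K.lt_succ_self),
    fun i => ⌊(φ (K + 1) : ℝ) * x i⌋ - ⌊(φ K : ℝ) * x i⌋, ?_⟩
  have hdiff : (fun i => ((⌊(φ (K + 1) : ℝ) * x i⌋ - ⌊(φ K : ℝ) * x i⌋ : ℤ) : ℝ))
      - ((φ (K + 1) - φ K : ℕ) : ℝ) • x = u (φ K) - u (φ (K + 1)) := by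
    ext i
    simp only [u, Int.fract, Pi.sub_apply, Pi.smul_apply, smul_eq_mul,
      Nat.cast_sub (hφ K.lt_succ_self).le]
    push_cast
    ring
  rw [hdiff, ← dist_eq_norm, dist_comm]
  exact hK _ K.le_succ

theorem dotProduct_mulVec_smul_add {R : Type*} [CommRing R] (G : Matrix ι ι R) (x v : ι → R)
    (m : R) : (m • x + v) ⬝ᵥ G *ᵥ (m • x + v) =
      m ^ 2 * (x ⬝ᵥ G *ᵥ x) + m * (x ⬝ᵥ G *ᵥ v + v ⬝ᵥ G *ᵥ x) + v ⬝ᵥ G *ᵥ v := by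
  simp only [mulVec_add, mulVec_smul, dotProduct_add, add_dotProduct, smul_dotProduct,
    dotProduct_smul, smul_eq_mul]
  ring

theorem dotProduct_mulVec_nonneg_of_forall_intCast (G : Matrix ι ι ℝ)
    (hG : ∀ e : ι → ℤ, 0 ≤ (fun i => (e i : ℝ)) ⬝ᵥ G *ᵥ fun i => (e i : ℝ)) (y : ι → ℝ) :
    0 ≤ y ⬝ᵥ G *ᵥ y := by
  by_contra! hy
  have hcont : Continuous fun v => |y ⬝ᵥ G *ᵥ v + v ⬝ᵥ G *ᵥ y| + |v ⬝ᵥ G *ᵥ v| := by fun_prop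
  obtain ⟨δ, hδ, hsmall⟩ :=
    Metric.continuousAt_iff.1 (hcont.continuousAt (x := 0)) _ (neg_pos.2 hy)
  obtain ⟨m, hm, e, he⟩ := exists_intCast_sub_nat_smul_norm_lt y hδ
  set v := (fun i => (e i : ℝ)) - (m : ℝ) • y
  have hv : |y ⬝ᵥ G *ᵥ v + v ⬝ᵥ G *ᵥ y| + |v ⬝ᵥ G *ᵥ v| < -(y ⬝ᵥ G *ᵥ y) :=
    (le_abs_self _).trans_lt <| by
      simpa [Real.dist_eq] using hsmall (x := v) (by rwa [dist_zero_right])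
  have he_nonneg := hG e
  rw [show (fun i => (e i : ℝ)) = (m : ℝ) • y + v by simp [v],
    dotProduct_mulVec_smul_add] at he_nonneg
  have hm1 : (1 : ℝ) ≤ m := Nat.one_le_cast.2 hm
  have hbound : (m : ℝ) ^ 2 * (y ⬝ᵥ G *ᵥ y) + m * (y ⬝ᵥ G *ᵥ v + v ⬝ᵥ G *ᵥ y) + v ⬝ᵥ G *ᵥ v ≤
      m * (y ⬝ᵥ G *ᵥ y + |y ⬝ᵥ G *ᵥ v + v ⬝ᵥ G *ᵥ y| + |v ⬝ᵥ G *ᵥ v|) := by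
    have hm0 : (0 : ℝ) ≤ m := by linarith
    nlinarith [mul_le_mul_of_nonneg_left (le_abs_self (y ⬝ᵥ G *ᵥ v + v ⬝ᵥ G *ᵥ y)) hm0,
      mul_nonneg (sub_nonneg.2 hm1) (abs_nonneg (v ⬝ᵥ G *ᵥ v)), le_abs_self (v ⬝ᵥ G *ᵥ v),
      mul_nonneg (mul_nonneg (sub_nonneg.2 hm1) hm0) (neg_nonneg.2 hy.le)]
  exact (he_nonneg.trans hbound).not_gt (mul_neg_of_pos_of_neg (by linarith) (by linarith))

theorem exists_intCast_dotProduct_mulVec_lt_of_mulVec_eq_zero {G : Matrix ι ι ℝ} (hG : G.IsSymm)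
    {x : ι → ℝ} (hx : x ≠ 0) (hGx : G *ᵥ x = 0) {ε : ℝ} (hε : 0 < ε) :
    ∃ e : ι → ℤ, e ≠ 0 ∧ ((fun i => (e i : ℝ)) ⬝ᵥ G *ᵥ fun i => (e i : ℝ)) < ε := by
  have hcont : Continuous fun v : ι → ℝ => v ⬝ᵥ G *ᵥ v := by fun_prop
  obtain ⟨δ, hδ, hsmall⟩ := Metric.continuousAt_iff.1 (hcont.continuousAt (x := 0)) ε hε
  obtain ⟨m, hm, e, he⟩ :=
    exists_intCast_sub_nat_smul_norm_lt x (lt_min hδ (norm_pos_iff.2 hx))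
  set v := (fun i => (e i : ℝ)) - (m : ℝ) • x
  refine ⟨e, ?_, ?_⟩
  · rintro rfl
    have hv : v = -((m : ℝ) • x) := by ext; simp [v]
    have : ‖x‖ ≤ ‖v‖ := by
      rw [hv, norm_neg, norm_smul, Real.norm_natCast]
      exact le_mul_of_one_le_left (norm_nonneg x) (Nat.one_le_cast.2 hm)
    exact (he.trans_le (min_le_right _ _)).not_ge this
  · have hxG : x ᵥ* G = 0 := by rw [← mulVec_transpose, hG.eq, hGx]
    have hv := hsmall (x := v) (by rw [dist_zero_right]; exact he.trans_le (min_le_left _ _))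
    rw [show (fun i => (e i : ℝ)) = (m : ℝ) • x + v by simp [v], dotProduct_mulVec_smul_add,
      dotProduct_mulVec x G v, hxG, hGx]
    simpa [Real.dist_eq] using (le_abs_self _).trans_lt hv

/-- every matrix in the Ryshkov polytope `R_λ` (with `λ > 0`) is
positive definite: if `G` is real symmetric with `eᵀGe ≥ λ` for all nonzero
integer vectors `e`, then `xᵀGx > 0` for all nonzero real vectors `x`. -/
theorem ryshkov_posdef (N : ℕ) (lam : ℝ) (hlam : 0 < lam)
    (G : Matrix (Fin N) (Fin N) ℝ) (hsymm : G.IsSymm)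
    (hG : ∀ e : Fin N → ℤ, e ≠ 0 → lam ≤ intQuadForm G e) :
    ∀ x : Fin N → ℝ, x ≠ 0 → 0 < x ⬝ᵥ G.mulVec x := by
  have hnonneg : ∀ y : Fin N → ℝ, 0 ≤ y ⬝ᵥ G *ᵥ y :=
    dotProduct_mulVec_nonneg_of_forall_intCast G fun e => by
      rcases eq_or_ne e 0 with rfl | he
      · simp
      · exact hlam.le.trans (hG e he)
  have hpsd : G.PosSemidef :=
    .of_dotProduct_mulVec_nonneg (isHermitian_iff_isSymm.2 hsymm) (by simpa using hnonneg)
  intro x hx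
  refine (hnonneg x).lt_of_ne fun hx0 => ?_
  have hGx : G *ᵥ x = 0 := (hpsd.dotProduct_mulVec_zero_iff x).1 (by simpa using hx0.symm)
  obtain ⟨e, he, hlt⟩ :=
    exists_intCast_dotProduct_mulVec_lt_of_mulVec_eq_zero hsymm hx hGx hlam
  exact (hG e he).not_gt hlt
end

section
/- Lower bound on the transmit power: let S be a real N×N diagonal matrix with positive diagonal entries, L a real invertible N×N matrix, U any orthogonal N×N matrix, and Z any unimodular integer N×N matrix. Then tr(Zᵀ Lᵀ Uᵀ S⁻² U L Z) ≥ N · (|det L| / det S)^{2/N}. -/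
/-!
The matrix `Zᵀ Lᵀ Uᵀ S⁻² U L Z` is `Mᵀ M` with `M = S⁻¹ U L Z`. Its trace is the sum of the
(nonnegative) eigenvalues of `Mᵀ M` and its determinant their product, so AM–GM gives
`N · det(Mᵀ M)^{1/N} ≤ tr(Mᵀ M)`, while `det(Mᵀ M) = (det M)²` and
`|det M| = |det L| / |det S|` because `U` and `Z` have determinant `±1`.
-/

open Matrix

/-- A unimodular matrix: integer entries and determinant `±1`. -/
def IsUnimodular {N : ℕ} (Z : Matrix (Fin N) (Fin N) ℤ) : Prop :=
  Z.det = 1 ∨ Z.det = -1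

namespace Matrix

variable {n R : Type*} [Fintype n] [DecidableEq n]

theorem PosSemidef.card_mul_det_rpow_le_trace {A : Matrix n n ℝ} (hA : A.PosSemidef) :
    Fintype.card n * A.det ^ ((Fintype.card n : ℝ)⁻¹) ≤ A.trace := by
  rcases isEmpty_or_nonempty n with hn | hn
  · simp
  have hcard : (0 : ℝ) < Fintype.card n := by exact_mod_cast Fintype.card_pos
  have amgm := Real.geom_mean_le_arith_mean Finset.univ (fun _ => 1) hA.isHermitian.eigenvalues
    (fun _ _ => zero_le_one) (by simpa using hcard) (fun i _ => hA.eigenvalues_nonneg i)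
  simp only [Real.rpow_one, one_mul, Finset.sum_const, Finset.card_univ, nsmul_eq_mul, mul_one]
    at amgm
  rw [hA.isHermitian.det_eq_prod_eigenvalues, hA.isHermitian.trace_eq_sum_eigenvalues]
  simp only [RCLike.ofReal_real_eq_id, id]
  rwa [le_div_iff₀' hcard] at amgm

theorem card_mul_abs_det_rpow_le_trace_transpose_mul_self (M : Matrix n n ℝ) :
    Fintype.card n * |M.det| ^ ((2 : ℝ) / Fintype.card n) ≤ (Mᵀ * M).trace := by
  have hpsd : (Mᵀ * M).PosSemidef := by
    simpa only [conjTranspose_eq_transpose_of_trivial] using posSemidef_conjTranspose_mul_self M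
  have hdet : (Mᵀ * M).det = |M.det| ^ (2 : ℝ) := by
    rw [det_mul, det_transpose, Real.rpow_two, sq_abs, sq]
  calc Fintype.card n * |M.det| ^ ((2 : ℝ) / Fintype.card n)
      = Fintype.card n * (Mᵀ * M).det ^ ((Fintype.card n : ℝ)⁻¹) := by
        rw [hdet, ← Real.rpow_mul (abs_nonneg _), div_eq_mul_inv]
    _ ≤ (Mᵀ * M).trace := hpsd.card_mul_det_rpow_le_trace

theorem abs_det_eq_one_of_transpose_mul_self_eq_one [CommRing R] [LinearOrder R]
    [IsStrictOrderedRing R] {U : Matrix n n R} (hU : Uᵀ * U = 1) : |U.det| = 1 := by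
  have h := congrArg det hU
  rw [det_mul, det_transpose, det_one, ← sq, ← sq_abs] at h
  exact (pow_eq_one_iff_of_nonneg (abs_nonneg _) two_ne_zero).mp h

end Matrix

theorem IsUnimodular.abs_det_map_intCast {N : ℕ} {R : Type*} [CommRing R] [LinearOrder R]
    [IsOrderedRing R] {Z : Matrix (Fin N) (Fin N) ℤ} (hZ : IsUnimodular Z) :
    |(Z.map (Int.cast : ℤ → R)).det| = 1 := by
  have hdet : (Z.map (Int.cast : ℤ → R)).det = Z.det := ((Int.castRingHom R).map_det Z).symm
  rcases hZ with h | h <;> simp [hdet, h]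

theorem transmit_power_lower_bound_general (N : ℕ)
    (s : Fin N → ℝ)
    (L : Matrix (Fin N) (Fin N) ℝ)
    (U : Matrix (Fin N) (Fin N) ℝ) (hU : Uᵀ * U = 1)
    (Z : Matrix (Fin N) (Fin N) ℤ) (hZ : IsUnimodular Z) :
    (N : ℝ) * ((|L.det| / ∏ j, s j) ^ ((2 : ℝ) / N)) ≤
      ((Z.map (Int.cast : ℤ → ℝ))ᵀ * Lᵀ * Uᵀ *
        Matrix.diagonal (fun j => 1 / (s j) ^ 2) * U * L *
        Z.map (Int.cast : ℤ → ℝ)).trace := by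
  set D := diagonal fun j => 1 / s j
  set M := D * U * L * Z.map (Int.cast : ℤ → ℝ)
  have hdiag : diagonal (fun j => 1 / s j ^ 2) = Dᵀ * D := by
    rw [diagonal_transpose, diagonal_mul_diagonal]
    simp only [one_div, sq, mul_inv]
  have hgram : (Z.map (Int.cast : ℤ → ℝ))ᵀ * Lᵀ * Uᵀ * diagonal (fun j => 1 / s j ^ 2) * U * L *
      Z.map (Int.cast : ℤ → ℝ) = Mᵀ * M := by
    simp only [hdiag, M, transpose_mul, Matrix.mul_assoc]
  have hdetM : |M.det| = |(|L.det| / ∏ j, s j)| := by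
    simp only [M, D, det_mul, det_diagonal, abs_mul, abs_div, abs_abs,
      abs_det_eq_one_of_transpose_mul_self_eq_one hU, hZ.abs_det_map_intCast,
      Finset.prod_div_distrib, Finset.prod_const_one, abs_one]
    ring
  calc (N : ℝ) * (|L.det| / ∏ j, s j) ^ ((2 : ℝ) / N)
      ≤ N * |(|L.det| / ∏ j, s j)| ^ ((2 : ℝ) / N) := by
        refine mul_le_mul_of_nonneg_left ?_ (Nat.cast_nonneg N)
        exact (le_abs_self _).trans (Real.abs_rpow_le_abs_rpow _ _)
    _ = N * |M.det| ^ ((2 : ℝ) / N) := by rw [hdetM]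
    _ ≤ (Mᵀ * M).trace := by
        simpa using card_mul_abs_det_rpow_le_trace_transpose_mul_self M
    _ = _ := by rw [hgram]

/-- lower bound on the transmit power. For diagonal `S` with
positive entries, invertible `L`, orthogonal `U` and unimodular `Z`,
`tr(Zᵀ Lᵀ Uᵀ S⁻² U L Z) ≥ N (|det L| / det S)^{2/N}`. -/
theorem transmit_power_lower_bound (N : ℕ) (hN : 0 < N)
    (s : Fin N → ℝ) (hs : ∀ j, 0 < s j)
    (L : Matrix (Fin N) (Fin N) ℝ) (hL : IsUnit L.det)
    (U : Matrix (Fin N) (Fin N) ℝ) (hU : Uᵀ * U = 1)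
    (Z : Matrix (Fin N) (Fin N) ℤ) (hZ : IsUnimodular Z) :
    (N : ℝ) * ((|L.det| / ∏ j, s j) ^ ((2 : ℝ) / N)) ≤
      ((Z.map (Int.cast : ℤ → ℝ))ᵀ * Lᵀ * Uᵀ *
        Matrix.diagonal (fun j => 1 / (s j) ^ 2) * U * L *
        Z.map (Int.cast : ℤ → ℝ)).trace :=
  transmit_power_lower_bound_general N s L U hU Z hZ
end

section
/- Geometric mean decomposition: for every invertible real N×N matrix A there exist orthogonal N×N matrices U and V and an upper triangular N×N matrix R whose diagonal entries are all equal to |det A|^{1/N}, such that A = U R Vᵀ. -/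
/-!
The singular values of `A` have geometric mean `d = |det A|^{1/N}`, so `d` lies between the
smallest and the largest of them; as the unit sphere is connected there is a unit vector `u` with
`‖Aᵀ u‖ = d`. Completing `u` and `Aᵀ u / d` to orthonormal bases (the columns of `P` and `Q`) makes
the last row of `Pᵀ A Q` equal to `(0, …, 0, d)`. Its leading `(N-1) × (N-1)` block then has
determinant `± d^{N-1}` and so, by induction, a decomposition of the same kind, which extends
block-diagonally to one of `Pᵀ A Q`.
-/

open Matrix Module Metric

namespace LinearMap

section RCLike

variable {𝕜 E F : Type*} [RCLike 𝕜] [NormedAddCommGroup E] [InnerProductSpace 𝕜 E]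
  [FiniteDimensional 𝕜 E] [NormedAddCommGroup F] [InnerProductSpace 𝕜 F] [FiniteDimensional 𝕜 F]

theorem norm_apply_eigenvectorBasis_adjoint_comp_self (T : E →ₗ[𝕜] F) {n : ℕ}
    (hn : finrank 𝕜 E = n) (i : Fin n) :
    ‖T (T.isSymmetric_adjoint_comp_self.eigenvectorBasis hn i)‖ = T.singularValues i := by
  rw [← sq_eq_sq₀ (norm_nonneg _) (T.singularValues_nonneg i), T.sq_singularValues_fin hn,
    ← @inner_self_eq_norm_sq 𝕜, ← adjoint_inner_right, ← comp_apply,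
    T.isSymmetric_adjoint_comp_self.apply_eigenvectorBasis]
  simp [inner_smul_right]

end RCLike

variable {E : Type*} [NormedAddCommGroup E] [InnerProductSpace ℝ E] [FiniteDimensional ℝ E]

theorem exists_norm_eq_one_and_norm_apply_eq (T : E →ₗ[ℝ] E) {d : ℝ} (hd : 0 ≤ d)
    (hdet : |T.det| = d ^ finrank ℝ E) (hE : 0 < finrank ℝ E) :
    ∃ v : E, ‖v‖ = 1 ∧ ‖T v‖ = d := by
  set n := finrank ℝ E
  have hprod : ∏ i ∈ Finset.range n, T.singularValues i = d ^ n := by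
    rw [← normDet_eq_prod_singularValues, normDet_eq_abs_det, hdet]
  have hlow : T.singularValues (n - 1) ≤ d := by
    refine le_of_pow_le_pow_left₀ hE.ne' hd ?_
    calc T.singularValues (n - 1) ^ n = ∏ _i ∈ Finset.range n, T.singularValues (n - 1) := by
          simp
      _ ≤ ∏ i ∈ Finset.range n, T.singularValues i :=
          Finset.prod_le_prod (fun _ _ ↦ T.singularValues_nonneg _)
            fun i hi ↦ T.singularValues_antitone (Nat.le_sub_one_of_lt (Finset.mem_range.mp hi))
      _ = d ^ n := hprod
  have hhigh : d ≤ T.singularValues 0 := by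
    refine le_of_pow_le_pow_left₀ hE.ne' (T.singularValues_nonneg 0) ?_
    calc d ^ n = ∏ i ∈ Finset.range n, T.singularValues i := hprod.symm
      _ ≤ ∏ _i ∈ Finset.range n, T.singularValues 0 :=
          Finset.prod_le_prod (fun _ _ ↦ T.singularValues_nonneg _)
            fun i _ ↦ T.singularValues_antitone i.zero_le
      _ = T.singularValues 0 ^ n := by simp
  let b := T.isSymmetric_adjoint_comp_self.eigenvectorBasis rfl
  have hb (i : Fin n) : b i ∈ sphere (0 : E) 1 := by simp [b.orthonormal.1 i]
  have hTb (i : Fin n) : ‖T (b i)‖ = T.singularValues i :=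
    T.norm_apply_eigenvectorBasis_adjoint_comp_self rfl i
  obtain ⟨v, hv, hTv⟩ : d ∈ (‖T ·‖) '' sphere (0 : E) 1 := by
    by_cases hn : 1 < n
    · refine (isPreconnected_sphere ?_ 0 1).intermediate_value (hb ⟨n - 1, by omega⟩) (hb ⟨0, hE⟩)
        T.continuous_of_finiteDimensional.norm.continuousOn ⟨?_, ?_⟩
      · rwa [← finrank_eq_rank, Nat.one_lt_cast]
      · rwa [hTb]
      · rwa [hTb]
    · refine ⟨b ⟨0, hE⟩, hb _, ?_⟩
      exact (hTb _).trans (le_antisymm (by rwa [show n - 1 = 0 by omega] at hlow) hhigh)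
  exact ⟨v, by simpa using hv, hTv⟩

end LinearMap

namespace Matrix

theorem det_toEuclideanLin {𝕜 ι : Type*} [RCLike 𝕜] [Fintype ι] [DecidableEq ι]
    (A : Matrix ι ι 𝕜) :
    LinearMap.det (toEuclideanLin A) = A.det := by
  rw [toEuclideanLin_eq_toLin_orthonormal, LinearMap.det_toLin]

theorem exists_mem_orthogonalGroup_apply_eq {ι : Type*} [Fintype ι] [DecidableEq ι]
    {u : EuclideanSpace ℝ ι} (hu : ‖u‖ = 1) (j : ι) :
    ∃ P ∈ orthogonalGroup ι ℝ, ∀ i, P i j = u i := by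
  have hu' : Orthonormal ℝ (({j} : Set ι).domRestrict fun _ ↦ u) :=
    orthonormal_subsingleton_iff.mpr fun _ ↦ hu
  obtain ⟨b, hb⟩ := hu'.exists_orthonormalBasis_extension_of_card_eq (by simp)
  refine ⟨(EuclideanSpace.basisFun ι ℝ).toBasis.toMatrix b,
    (EuclideanSpace.basisFun ι ℝ).toMatrix_orthonormalBasis_mem_orthogonal b, fun i ↦ ?_⟩
  simp [Basis.toMatrix_apply, hb j rfl]

theorem exists_mem_orthogonalGroup_row_last_eq_single {n : ℕ}
    (A : Matrix (Fin (n + 1)) (Fin (n + 1)) ℝ) {d : ℝ} (hd : 0 < d) (hdet : |A.det| = d ^ (n + 1)) :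
    ∃ P ∈ orthogonalGroup (Fin (n + 1)) ℝ, ∃ Q ∈ orthogonalGroup (Fin (n + 1)) ℝ,
      (Pᵀ * A * Q) (Fin.last n) = Pi.single (Fin.last n) d := by
  obtain ⟨u, hu, hAu⟩ := (toEuclideanLin Aᵀ).exists_norm_eq_one_and_norm_apply_eq hd.le
    (by rwa [det_toEuclideanLin, det_transpose, finrank_euclideanSpace_fin]) (by simp)
  set v := d⁻¹ • toEuclideanLin Aᵀ u
  have hv : ‖v‖ = 1 := by simp [v, norm_smul, hAu, abs_of_pos hd, hd.ne']
  have hAv (k : Fin (n + 1)) : (Aᵀ *ᵥ u) k = d * v k := by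
    simp [v, hd.ne']
  obtain ⟨P, hP, hPu⟩ := exists_mem_orthogonalGroup_apply_eq hu (Fin.last n)
  obtain ⟨Q, hQ, hQv⟩ := exists_mem_orthogonalGroup_apply_eq hv (Fin.last n)
  refine ⟨P, hP, Q, hQ, funext fun j ↦ ?_⟩
  calc (Pᵀ * A * Q) (Fin.last n) j = ∑ k, (Aᵀ *ᵥ u) k * Q k j := by
        simp [mul_apply, mulVec, dotProduct, hPu, mul_comm]
    _ = d * (Qᵀ * Q) (Fin.last n) j := by
        simp [mul_apply, hAv, hQv, Finset.mul_sum, mul_assoc]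
    _ = (Pi.single (Fin.last n) d : Fin (n + 1) → ℝ) j := by
        rw [(mem_orthogonalGroup_iff' ..).mp hQ]
        simp [one_apply, Pi.single_apply, eq_comm]

theorem reindex_fromBlocks_mem_orthogonalGroup {ι κ τ R : Type*} [Fintype ι] [DecidableEq ι]
    [Fintype κ] [DecidableEq κ] [Fintype τ] [DecidableEq τ] [CommRing R] (e : ι ⊕ κ ≃ τ)
    {U : Matrix ι ι R} {W : Matrix κ κ R} (hU : U ∈ orthogonalGroup ι R)
    (hW : W ∈ orthogonalGroup κ R) :
    reindex e e (fromBlocks U 0 0 W) ∈ orthogonalGroup τ R := by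
  rw [mem_orthogonalGroup_iff'] at hU hW ⊢
  rw [reindex_apply, transpose_submatrix, submatrix_mul_equiv, fromBlocks_transpose,
    fromBlocks_multiply]
  simp [hU, hW]

theorem isUpperTriangular_reindex_fromBlocks {R : Type*} [Zero R] {m n : ℕ}
    {A : Matrix (Fin m) (Fin m) R} (B : Matrix (Fin m) (Fin n) R) {D : Matrix (Fin n) (Fin n) R}
    (hA : A.IsUpperTriangular) (hD : D.IsUpperTriangular) :
    (reindex finSumFinEquiv finSumFinEquiv (fromBlocks A B 0 D)).IsUpperTriangular := by
  rw [IsUpperTriangular, blockTriangular_reindex_iff]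
  rintro (i | i) (j | j) hij
  all_goals simp only [Function.comp_apply, id_eq, finSumFinEquiv_apply_left,
    finSumFinEquiv_apply_right, Fin.lt_def, Fin.val_castAdd, Fin.val_natAdd] at hij
  · exact hA (Fin.lt_def.mpr hij)
  · omega
  · rfl
  · exact hD (show j < i from Fin.lt_def.mpr (by omega))

theorem eq_reindex_fromBlocks_of_row_last {R : Type*} [Zero R] {n : ℕ}
    {M : Matrix (Fin (n + 1)) (Fin (n + 1)) R} {d : R}
    (hM : M (Fin.last n) = Pi.single (Fin.last n) d) :
    M = reindex finSumFinEquiv finSumFinEquiv (fromBlocks (M.submatrix Fin.castSucc Fin.castSucc)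
      (M.submatrix Fin.castSucc fun _ ↦ Fin.last n) 0 (diagonal fun _ ↦ d)) := by
  ext i j
  have hMj := congrFun hM
  induction i using Fin.lastCases <;> induction j using Fin.lastCases <;> simp [hMj]

theorem abs_det_of_mem_orthogonalGroup {ι R : Type*} [Fintype ι] [DecidableEq ι] [CommRing R]
    [LinearOrder R] [IsStrictOrderedRing R] {P : Matrix ι ι R} (hP : P ∈ orthogonalGroup ι R) :
    |P.det| = 1 := by
  have h := congrArg det ((mem_orthogonalGroup_iff' ..).mp hP)
  rw [det_mul, det_transpose, det_one, ← sq, ← sq_abs] at h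
  exact (pow_eq_one_iff_of_nonneg (abs_nonneg _) two_ne_zero).mp h

def HasGeomMeanDecomposition {ι : Type*} [Fintype ι] [LinearOrder ι] (A : Matrix ι ι ℝ) (d : ℝ) :
    Prop :=
  ∃ U ∈ orthogonalGroup ι ℝ, ∃ V ∈ orthogonalGroup ι ℝ, ∃ R : Matrix ι ι ℝ,
    R.IsUpperTriangular ∧ (∀ i, R i i = d) ∧ A = U * R * Vᵀ

namespace HasGeomMeanDecomposition

theorem of_transpose_mul_mul {ι : Type*} [Fintype ι] [LinearOrder ι] {A P Q : Matrix ι ι ℝ}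
    {d : ℝ} (hP : P ∈ orthogonalGroup ι ℝ) (hQ : Q ∈ orthogonalGroup ι ℝ)
    (h : (Pᵀ * A * Q).HasGeomMeanDecomposition d) : A.HasGeomMeanDecomposition d := by
  obtain ⟨U, hU, V, hV, R, hR, hRd, hPAQ⟩ := h
  refine ⟨P * U, mul_mem hP hU, Q * V, mul_mem hQ hV, R, hR, hRd, ?_⟩
  calc A = P * (Pᵀ * A * Q) * Qᵀ := by
        simp only [← mul_assoc, (mem_orthogonalGroup_iff ..).mp hP, one_mul]
        simp only [mul_assoc, (mem_orthogonalGroup_iff ..).mp hQ, mul_one]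
    _ = P * U * R * (Q * V)ᵀ := by simp only [hPAQ, transpose_mul, mul_assoc]

theorem reindex_fromBlocks {n : ℕ} {B : Matrix (Fin n) (Fin n) ℝ} {d : ℝ}
    (hB : B.HasGeomMeanDecomposition d) (C : Matrix (Fin n) (Fin 1) ℝ) :
    (reindex finSumFinEquiv finSumFinEquiv
      (fromBlocks B C 0 (diagonal fun _ ↦ d))).HasGeomMeanDecomposition d := by
  obtain ⟨U, hU, V, hV, R, hR, hRd, rfl⟩ := hB
  refine ⟨_, reindex_fromBlocks_mem_orthogonalGroup finSumFinEquiv hU (one_mem _),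
    _, reindex_fromBlocks_mem_orthogonalGroup finSumFinEquiv hV (one_mem _),
    _, isUpperTriangular_reindex_fromBlocks (Uᵀ * C) hR (blockTriangular_diagonal fun _ ↦ d),
    fun i ↦ ?_, ?_⟩
  · obtain ⟨i | i, rfl⟩ := finSumFinEquiv.surjective i <;> simp [hRd]
  · simp [transpose_submatrix, submatrix_mul_equiv, fromBlocks_transpose, fromBlocks_multiply,
      ← Matrix.mul_assoc U Uᵀ, (mem_orthogonalGroup_iff ..).mp hU]

end HasGeomMeanDecomposition

theorem hasGeomMeanDecomposition_of_abs_det_eq_pow {n : ℕ} (A : Matrix (Fin n) (Fin n) ℝ) {d : ℝ}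
    (hd : 0 < d) (hdet : |A.det| = d ^ n) : A.HasGeomMeanDecomposition d := by
  induction n with
  | zero =>
    exact ⟨1, one_mem _, 1, one_mem _, 1, blockTriangular_one, finZeroElim, Subsingleton.elim _ _⟩
  | succ n ih =>
    obtain ⟨P, hP, Q, hQ, hrow⟩ := exists_mem_orthogonalGroup_row_last_eq_single A hd hdet
    refine .of_transpose_mul_mul hP hQ ?_
    set M := Pᵀ * A * Q
    rw [eq_reindex_fromBlocks_of_row_last hrow]
    refine .reindex_fromBlocks (ih _ ?_) _
    have hdetM : |M.det| = |A.det| := by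
      simp [M, abs_det_of_mem_orthogonalGroup hP, abs_det_of_mem_orthogonalGroup hQ]
    rw [eq_reindex_fromBlocks_of_row_last hrow, det_reindex_self, det_fromBlocks_zero₂₁] at hdetM
    simp only [det_diagonal, Finset.univ_unique, Finset.prod_singleton, abs_mul,
      abs_of_pos hd, hdet, pow_succ] at hdetM
    exact mul_right_cancel₀ hd.ne' hdetM

end Matrix

/-- geometric mean decomposition. Every invertible real `N×N`
matrix `A` can be written `A = U R Vᵀ` with `U, V` orthogonal and `R` upper
triangular with all diagonal entries equal to `|det A|^{1/N}`. -/
theorem geometric_mean_decomposition (N : ℕ) (hN : 0 < N)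
    (A : Matrix (Fin N) (Fin N) ℝ) (hA : IsUnit A.det) :
    ∃ U V R : Matrix (Fin N) (Fin N) ℝ,
      Uᵀ * U = 1 ∧ Vᵀ * V = 1 ∧
      (∀ i j : Fin N, j < i → R i j = 0) ∧
      (∀ i : Fin N, R i i = |A.det| ^ ((1 : ℝ) / N)) ∧
      A = U * R * Vᵀ := by
  have hd : 0 < |A.det| ^ ((1 : ℝ) / N) := Real.rpow_pos_of_pos (abs_pos.mpr hA.ne_zero) _
  have hdet : |A.det| = (|A.det| ^ ((1 : ℝ) / N)) ^ N := by
    rw [one_div, Real.rpow_inv_natCast_pow (abs_nonneg _) hN.ne']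
  obtain ⟨U, hU, V, hV, R, hR, hRd, hURV⟩ := A.hasGeomMeanDecomposition_of_abs_det_eq_pow hd hdet
  exact ⟨U, V, R, (mem_orthogonalGroup_iff' ..).mp hU, (mem_orthogonalGroup_iff' ..).mp hV,
    fun _ _ h ↦ hR h, hRd, hURV⟩
end

section
/- Trace bound for the optimal Gram matrix: let S be a real N×N diagonal matrix with diagonal entries s₁ ≥ … ≥ s_N > 0, and define h(G) := inf over orthogonal N×N matrices U of tr(S⁻² U G Uᵀ). If G ∈ R₁ (i.e., G is real symmetric with eᵀGe ≥ 1 for all nonzero e ∈ ℤ^N) satisfies h(G) ≤ h(G') for every G' ∈ R₁, then tr(G) ≤ N · (s₁ / (det S)^{1/N})². -/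
/-!
Every `G ∈ R₁` is positive semidefinite (`xᵀ G x` is the limit of `⌊n x⌋ᵀ G ⌊n x⌋ / n² ≥ 0`),
so each diagonal entry of `U G Uᵀ` is nonnegative and `tr(S⁻² U G Uᵀ) ≥ tr(G) / s₁²`; hence
`h(G) ≥ tr(G) / s₁²`. For the upper bound it suffices to exhibit some `G' ∈ R₁` orthogonally
similar to `S² / (det S)^{2/N}`, since then `h(G') ≤ N / (det S)^{2/N}`.

Such a `G'` exists for every positive spectrum `d` with `∏ d = 1`, by induction on the dimension.
Pick `a = d_i > 1` and `b = d_j < 1`, and realise the spectrum in which `a, b` are merged into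
`a b` by some `H ∈ R₁`. For any row `V`, the Gram matrix of `x ↦ xᵀ H x + (V x + y)²` is
again in `R₁`: for an integer vector either `x ≠ 0`, or `x = 0` and `y` is a nonzero integer.
Choosing `V` to couple the merged eigendirection with the new coordinate, a plane rotation
splits the eigenvalue `a b` back into `b` and `a`.
-/

open Matrix

/-- The Ryshkov polytope `R₁`. -/
def RyshkovOne (N : ℕ) : Set (Matrix (Fin N) (Fin N) ℝ) :=
  {G | G.IsSymm ∧ ∀ e : Fin N → ℤ, e ≠ 0 → 1 ≤ intQuadForm G e}

/-- The infimum over orthogonal matrices `U` of `tr(S⁻² U G Uᵀ)`, where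
`S⁻² = diag(1/s_j²)`. -/
noncomputable def orthInf {N : ℕ} (s : Fin N → ℝ)
    (G : Matrix (Fin N) (Fin N) ℝ) : ℝ :=
  sInf ((fun U : Matrix (Fin N) (Fin N) ℝ =>
      (Matrix.diagonal (fun j => 1 / (s j) ^ 2) * U * G * Uᵀ).trace) ''
    {U | Uᵀ * U = 1})

open Filter Topology

theorem tendsto_floor_natCast_mul_div_atTop (a : ℝ) :
    Tendsto (fun n : ℕ => (⌊n * a⌋ : ℝ) / n) atTop (𝓝 a) := by
  have hlow : Tendsto (fun n : ℕ => a - 1 / (n : ℝ)) atTop (𝓝 a) := by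
    simpa using (tendsto_const_nhds (x := a)).sub tendsto_one_div_atTop_nhds_zero_nat
  refine tendsto_of_tendsto_of_tendsto_of_le_of_le' hlow tendsto_const_nhds ?_ ?_ <;>
    filter_upwards [eventually_gt_atTop 0] with n hn <;>
    have hn' : (0 : ℝ) < n := Nat.cast_pos.mpr hn
  · rw [le_div_iff₀ hn', sub_mul, one_div_mul_cancel hn'.ne']
    linarith [Int.lt_floor_add_one ((n : ℝ) * a)]
  · rw [div_le_iff₀ hn', mul_comm]
    exact Int.floor_le _

section Ryshkov

variable {ι κ : Type*} [Fintype ι] [Fintype κ]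

def IsRyshkov (G : Matrix ι ι ℝ) : Prop :=
  ∀ e : ι → ℤ, e ≠ 0 → 1 ≤ (fun i => (e i : ℝ)) ⬝ᵥ G *ᵥ fun i => (e i : ℝ)

theorem dotProduct_mulVec_nonneg_of_int {G : Matrix ι ι ℝ}
    (hG : ∀ e : ι → ℤ, 0 ≤ (fun i => (e i : ℝ)) ⬝ᵥ G *ᵥ fun i => (e i : ℝ)) (x : ι → ℝ) :
    0 ≤ x ⬝ᵥ G *ᵥ x := by
  set y : ℕ → ι → ℝ := fun n i => (⌊n * x i⌋ : ℝ) / n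
  have hy : Tendsto y atTop (𝓝 x) :=
    tendsto_pi_nhds.mpr fun i => tendsto_floor_natCast_mul_div_atTop (x i)
  have hQ : Continuous fun x : ι → ℝ => x ⬝ᵥ G *ᵥ x :=
    continuous_id.dotProduct (continuous_const.matrix_mulVec continuous_id)
  refine ge_of_tendsto' ((hQ.tendsto x).comp hy) fun n => ?_
  have hscale : y n = ((n : ℝ)⁻¹) • fun i => ((⌊n * x i⌋ : ℤ) : ℝ) := by
    ext i; simp [y, div_eq_inv_mul]
  simp only [Function.comp_apply, hscale, mulVec_smul, smul_dotProduct, dotProduct_smul,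
    smul_eq_mul]
  have hn : 0 ≤ (n : ℝ)⁻¹ := inv_nonneg.mpr n.cast_nonneg
  exact mul_nonneg hn (mul_nonneg hn (hG _))

theorem IsRyshkov.dotProduct_mulVec_nonneg {G : Matrix ι ι ℝ} (hG : IsRyshkov G)
    (x : ι → ℝ) : 0 ≤ x ⬝ᵥ G *ᵥ x := by
  refine dotProduct_mulVec_nonneg_of_int (fun e => ?_) x
  rcases eq_or_ne e 0 with rfl | he
  · simp
  · exact zero_le_one.trans (hG e he)

theorem posSemidef_of_mem_ryshkovOne {N : ℕ} {G : Matrix (Fin N) (Fin N) ℝ}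
    (hG : G ∈ RyshkovOne N) : G.PosSemidef :=
  posSemidef_iff_dotProduct_mulVec.mpr
    ⟨hG.1, fun x => by simpa using IsRyshkov.dotProduct_mulVec_nonneg hG.2 x⟩

theorem one_le_sum_sq_of_int {e : ι → ℤ} (he : e ≠ 0) : 1 ≤ ∑ i, (e i : ℝ) ^ 2 := by
  obtain ⟨i, hi⟩ := Function.ne_iff.mp he
  calc (1 : ℝ) ≤ (e i : ℝ) ^ 2 :=
        (one_le_sq_iff_one_le_abs _).mpr (by exact_mod_cast Int.one_le_abs hi)
    _ ≤ ∑ i, (e i : ℝ) ^ 2 :=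
        Finset.single_le_sum (fun j _ => sq_nonneg (e j : ℝ)) (Finset.mem_univ i)

theorem isRyshkov_one [DecidableEq ι] : IsRyshkov (1 : Matrix ι ι ℝ) := fun e he => by
  simpa [dotProduct, sq] using one_le_sum_sq_of_int he

theorem IsRyshkov.reindex {G : Matrix ι ι ℝ} (hG : IsRyshkov G) (σ : ι ≃ κ) :
    IsRyshkov (Matrix.reindex σ σ G) := fun e he => by
  have h := hG (e ∘ σ) fun hzero => he (funext fun i => by simpa using congrFun hzero (σ.symm i))
  rw [reindex_apply, submatrix_mulVec_equiv]
  convert h using 1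
  rw [dotProduct_comp_equiv_symm]
  rfl

theorem dotProduct_transpose_mul_mul_mulVec (L D : Matrix ι ι ℝ) (x : ι → ℝ) :
    x ⬝ᵥ (Lᵀ * D * L) *ᵥ x = (L *ᵥ x) ⬝ᵥ D *ᵥ (L *ᵥ x) := by
  rw [← mulVec_mulVec, ← mulVec_mulVec, dotProduct_mulVec, vecMul_transpose]

theorem IsRyshkov.fromBlocks_extend [DecidableEq ι] [DecidableEq κ] {A : Matrix ι ι ℝ}
    (hA : IsRyshkov A) (V : Matrix κ ι ℝ) :
    IsRyshkov ((fromBlocks 1 0 V 1)ᵀ * fromBlocks A 0 0 1 * fromBlocks 1 0 V 1) := by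
  intro e he
  set x : ι → ℝ := fun i => (e (Sum.inl i) : ℝ)
  set y : κ → ℝ := fun k => (e (Sum.inr k) : ℝ)
  have hxy : (fun i => (e i : ℝ)) = Sum.elim x y := by ext (i | k) <;> rfl
  have hQ : (fun i => (e i : ℝ)) ⬝ᵥ ((fromBlocks 1 0 V 1)ᵀ * fromBlocks A 0 0 1 *
      fromBlocks 1 0 V 1) *ᵥ (fun i => (e i : ℝ)) = x ⬝ᵥ A *ᵥ x + (V *ᵥ x + y) ⬝ᵥ (V *ᵥ x + y) := by
    rw [dotProduct_transpose_mul_mul_mulVec, hxy]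
    simp [fromBlocks_mulVec, sumElim_dotProduct_sumElim]
  rw [hQ]
  by_cases hx : (fun i => e (Sum.inl i)) = 0
  · have hx0 : x = 0 := funext fun i => by simp [x, congrFun hx i]
    have hy : (fun k => e (Sum.inr k)) ≠ 0 := fun hy =>
      he (funext fun | Sum.inl i => congrFun hx i | Sum.inr k => congrFun hy k)
    simpa [hx0, dotProduct, sq] using one_le_sum_sq_of_int hy
  · have hsq := dotProduct_star_self_nonneg (V *ᵥ x + y)
    rw [star_trivial] at hsq
    linarith [hA _ hx]

end Ryshkov

section RyshkovConj

variable {ι κ : Type*} [Fintype ι] [Fintype κ] [DecidableEq ι] [DecidableEq κ]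

def HasRyshkovConj (A : Matrix ι ι ℝ) : Prop :=
  ∃ U : Matrix ι ι ℝ, Uᵀ * U = 1 ∧ IsRyshkov (Uᵀ * A * U)

theorem hasRyshkovConj_one : HasRyshkovConj (1 : Matrix ι ι ℝ) :=
  ⟨1, by simp, by simpa using isRyshkov_one⟩

theorem HasRyshkovConj.of_conj {A V : Matrix ι ι ℝ} (hV : Vᵀ * V = 1)
    (h : HasRyshkovConj (Vᵀ * A * V)) : HasRyshkovConj A := by
  obtain ⟨U, hU, hR⟩ := h
  refine ⟨V * U, ?_, ?_⟩
  · rw [transpose_mul, Matrix.mul_assoc, ← Matrix.mul_assoc Vᵀ, hV, Matrix.one_mul, hU]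
  · simpa only [transpose_mul, Matrix.mul_assoc] using hR

theorem HasRyshkovConj.reindex {A : Matrix ι ι ℝ} (h : HasRyshkovConj A) (σ : ι ≃ κ) :
    HasRyshkovConj (Matrix.reindex σ σ A) := by
  obtain ⟨U, hU, hR⟩ := h
  refine ⟨Matrix.reindex σ σ U, ?_, ?_⟩
  · simp [transpose_submatrix, submatrix_mul_equiv, hU]
  · simpa [transpose_submatrix, submatrix_mul_equiv] using hR.reindex σ

theorem HasRyshkovConj.fromBlocks_extend {A : Matrix ι ι ℝ} (h : HasRyshkovConj A)
    (V : Matrix κ ι ℝ) :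
    HasRyshkovConj ((fromBlocks 1 0 V 1)ᵀ * fromBlocks A 0 0 1 * fromBlocks 1 0 V 1) := by
  obtain ⟨W, hW, hR⟩ := h
  refine ⟨fromBlocks W 0 0 1, by simp [fromBlocks_transpose, fromBlocks_multiply, hW], ?_⟩
  have hcomm : fromBlocks 1 0 V 1 * fromBlocks W 0 0 1 =
      fromBlocks W 0 0 (1 : Matrix κ κ ℝ) * fromBlocks 1 0 (V * W) 1 := by
    simp [fromBlocks_multiply]
  have hconj : (fromBlocks W 0 0 1)ᵀ * fromBlocks A 0 0 1 * fromBlocks W 0 0 1 =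
      fromBlocks (Wᵀ * A * W) 0 0 (1 : Matrix κ κ ℝ) := by
    simp [fromBlocks_transpose, fromBlocks_multiply]
  convert hR.fromBlocks_extend (V * W) using 1
  calc _ = (fromBlocks 1 0 V 1 * fromBlocks W 0 0 1)ᵀ * fromBlocks A 0 0 1 *
        (fromBlocks 1 0 V 1 * fromBlocks W 0 0 1) := by
          simp only [transpose_mul, Matrix.mul_assoc]
    _ = _ := by
          rw [hcomm, ← hconj]
          simp only [transpose_mul, Matrix.mul_assoc]

theorem hasRyshkovConj_diagonal_split {μ : ι → ℝ} {a b c s : ℝ}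
    (hcs : c ^ 2 + s ^ 2 = 1) (hbal : b * c ^ 2 + a * s ^ 2 = 1)
    (h : HasRyshkovConj (diagonal (Sum.elim μ fun _ : Unit => a * b))) :
    HasRyshkovConj (diagonal (Sum.elim (Sum.elim μ fun _ : Unit => b) fun _ : Unit => a)) := by
  -- The extension by `V` couples the last two coordinates through the block
  -- `[[a b + β², β], [β, 1]]`, `β = (a - b) c s`, which the rotation `Q` diagonalises to `(b, a)`.
  set Q : Matrix ((ι ⊕ Unit) ⊕ Unit) ((ι ⊕ Unit) ⊕ Unit) ℝ :=
    fromBlocks (fromBlocks 1 0 0 (of fun _ _ => s)) (of fun i _ => Sum.elim 0 (fun _ => -c) i)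
      (of fun _ j => Sum.elim 0 (fun _ => c) j) (of fun _ _ => s)
  set V : Matrix Unit (ι ⊕ Unit) ℝ := of fun _ => Sum.elim 0 fun _ => (a - b) * c * s
  have hs2 : (a - b) * s ^ 2 = 1 - b := by linear_combination hbal - b * hcs
  have hc2 : (a - b) * c ^ 2 = a - 1 := by linear_combination a * hcs - hbal
  have hQ : Qᵀ * Q = 1 := by
    ext ((i | ⟨⟩) | ⟨⟩) ((j | ⟨⟩) | ⟨⟩) <;>
      simp [Q, mul_apply, Fintype.sum_sum_type, one_apply]
    · simp [eq_comm]
    · linear_combination hcs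
    · ring
    · ring
    · linear_combination hcs
  have hM : Qᵀ * diagonal (Sum.elim (Sum.elim μ fun _ : Unit => b) fun _ : Unit => a) * Q =
      (fromBlocks 1 0 V 1)ᵀ * fromBlocks (diagonal (Sum.elim μ fun _ : Unit => a * b)) 0 0 1 *
        fromBlocks 1 0 V 1 := by
    ext ((i | ⟨⟩) | ⟨⟩) ((j | ⟨⟩) | ⟨⟩) <;>
      simp [Q, V, mul_apply, Fintype.sum_sum_type, one_apply, diagonal_apply]
    · split_ifs <;> simp_all
    · linear_combination a * hcs - (a - b) * s ^ 2 * hc2 - a * hs2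
    · ring
    · ring
    · linear_combination hbal
  exact HasRyshkovConj.of_conj hQ (hM ▸ h.fromBlocks_extend V)

end RyshkovConj

theorem exists_lt_one_of_prod_eq_one {ι : Type*} [Fintype ι] {d : ι → ℝ}
    (hprod : ∏ i, d i = 1) (hne : ¬∀ i, d i = 1) : ∃ i, d i < 1 := by
  by_contra! hge
  obtain ⟨i, hi⟩ := not_forall.mp hne
  have hlt : ∏ _i : ι, (1 : ℝ) < ∏ i, d i :=
    Finset.prod_lt_prod (fun _ _ => one_pos) (fun i _ => hge i)
      ⟨i, Finset.mem_univ i, lt_of_le_of_ne (hge i) (Ne.symm hi)⟩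
  simp [hprod] at hlt

theorem exists_one_lt_of_prod_eq_one {ι : Type*} [Fintype ι] {d : ι → ℝ} (hd : ∀ i, 0 < d i)
    (hprod : ∏ i, d i = 1) (hne : ¬∀ i, d i = 1) : ∃ i, 1 < d i := by
  obtain ⟨i, hi⟩ := exists_lt_one_of_prod_eq_one (d := fun i => (d i)⁻¹)
    (by rw [Finset.prod_inv_distrib, hprod, inv_one])
    (fun h => hne fun i => inv_eq_one.mp (h i))
  exact ⟨i, (inv_lt_one₀ (hd i)).mp hi⟩

theorem exists_sq_add_sq_eq_one_and_mul_add_mul_eq_one {a b : ℝ} (hb : b < 1) (ha : 1 < a) :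
    ∃ c s : ℝ, c ^ 2 + s ^ 2 = 1 ∧ b * c ^ 2 + a * s ^ 2 = 1 := by
  have hab : 0 < a - b := by linarith
  refine ⟨√((a - 1) / (a - b)), √((1 - b) / (a - b)), ?_, ?_⟩ <;>
    rw [Real.sq_sqrt (div_nonneg (by linarith) hab.le),
      Real.sq_sqrt (div_nonneg (by linarith) hab.le)] <;>
    field_simp <;> ring

theorem hasRyshkovConj_diagonal_of_prod_eq_one {ι : Type*} [Fintype ι] [DecidableEq ι]
    {d : ι → ℝ} (hd : ∀ i, 0 < d i) (hprod : ∏ i, d i = 1) : HasRyshkovConj (diagonal d) := by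
  induction h : Fintype.card ι using Nat.strong_induction_on generalizing ι with
  | _ n ih =>
  by_cases hone : ∀ i, d i = 1
  · simpa [show d = 1 from funext hone] using hasRyshkovConj_one
  obtain ⟨j, hj⟩ := exists_lt_one_of_prod_eq_one hprod hone
  obtain ⟨i, hi⟩ := exists_one_lt_of_prod_eq_one hd hprod hone
  have hji : j ≠ i := by rintro rfl; linarith
  let κ := {k : {k // k ≠ i} // k ≠ ⟨j, hji⟩}
  let σ : (κ ⊕ Unit) ⊕ Unit ≃ ι :=
    (Equiv.sumCongr ((Equiv.optionEquivSumPUnit _).symm.trans (Equiv.optionSubtypeNe _))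
      (Equiv.refl Unit)).trans ((Equiv.optionEquivSumPUnit _).symm.trans (Equiv.optionSubtypeNe i))
  have hσ : d ∘ σ = Sum.elim (Sum.elim (fun k : κ => d k.1.1) fun _ => d j) fun _ => d i := by
    ext ((k | ⟨⟩) | ⟨⟩) <;> simp [σ]
  have hcard : Fintype.card (κ ⊕ Unit) < n := by
    have := Fintype.card_congr σ
    rw [Fintype.card_sum, Fintype.card_unit] at this
    omega
  have hprod' : ∏ k, Sum.elim (fun k : κ => d k.1.1) (fun _ : Unit => d i * d j) k = 1 := by
    rw [← hprod, ← Equiv.prod_comp σ]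
    change _ = ∏ x, (d ∘ σ) x
    rw [hσ]
    simp only [Fintype.prod_sum_type, Sum.elim_inl, Sum.elim_inr, Finset.univ_unique,
      Finset.prod_singleton]
    ring
  obtain ⟨c, s, hcs, hbal⟩ := exists_sq_add_sq_eq_one_and_mul_add_mul_eq_one hj hi
  have hsplit := (hasRyshkovConj_diagonal_split hcs hbal
    (ih _ hcard (fun k => by rcases k with k | ⟨⟩ <;> simp [hd]) hprod' rfl)).reindex σ
  rwa [← hσ, reindex_apply, submatrix_diagonal_equiv, Function.comp_assoc,
    Equiv.self_comp_symm, Function.comp_id] at hsplit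
theorem mul_trace_le_trace_diagonal_mul {ι : Type*} [Fintype ι] [DecidableEq ι]
    {A : Matrix ι ι ℝ} (hA : A.PosSemidef) {w : ι → ℝ} {c : ℝ} (hc : ∀ i, c ≤ w i) :
    c * A.trace ≤ (diagonal w * A).trace := by
  simp only [trace, diag_apply, diagonal_mul, Finset.mul_sum]
  exact Finset.sum_le_sum fun i _ => mul_le_mul_of_nonneg_right (hc i) hA.diag_nonneg

section OrthInf

variable {N : ℕ} {s : Fin N → ℝ} {G U : Matrix (Fin N) (Fin N) ℝ}

theorem mul_trace_le_trace_conj (hG : G.PosSemidef) (hU : Uᵀ * U = 1) {c : ℝ}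
    (hc : ∀ j, c ≤ 1 / s j ^ 2) :
    c * G.trace ≤ (diagonal (fun j => 1 / s j ^ 2) * U * G * Uᵀ).trace := by
  have hconj : (U * G * Uᵀ).PosSemidef := by
    simpa [conjTranspose_eq_transpose_of_trivial] using hG.mul_mul_conjTranspose_same U
  have htrace : (U * G * Uᵀ).trace = G.trace := by
    rw [trace_mul_cycle, hU, Matrix.one_mul]
  have h := mul_trace_le_trace_diagonal_mul hconj hc
  rwa [htrace, ← Matrix.mul_assoc, ← Matrix.mul_assoc] at h

theorem mul_trace_le_orthInf (hG : G.PosSemidef) {c : ℝ} (hc : ∀ j, c ≤ 1 / s j ^ 2) :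
    c * G.trace ≤ orthInf s G :=
  le_csInf ⟨_, 1, by simp, rfl⟩ fun _ ⟨_, hU, hval⟩ => hval ▸ mul_trace_le_trace_conj hG hU hc

theorem orthInf_le (hG : G.PosSemidef) (hU : Uᵀ * U = 1) :
    orthInf s G ≤ (diagonal (fun j => 1 / s j ^ 2) * U * G * Uᵀ).trace :=
  csInf_le ⟨0 * G.trace, fun _ ⟨_, hV, hval⟩ =>
    hval ▸ mul_trace_le_trace_conj hG hV fun _ => by positivity⟩ ⟨U, hU, rfl⟩

theorem trace_div_sq_le_orthInf (hN : 0 < N) (hs : ∀ j, 0 < s j) (hs_mono : Antitone s)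
    (hG : G.PosSemidef) : G.trace / s ⟨0, hN⟩ ^ 2 ≤ orthInf s G := by
  rw [← one_div_mul_eq_div]
  refine mul_trace_le_orthInf hG fun j => ?_
  have := hs j
  gcongr
  exact hs_mono (Fin.mk_le_of_le_val (Nat.zero_le _))

theorem exists_mem_ryshkovOne_orthInf_le (hN : 0 < N) (hs : ∀ j, 0 < s j) :
    ∃ G' ∈ RyshkovOne N, orthInf s G' ≤ N / ((∏ j, s j) ^ ((1 : ℝ) / N)) ^ 2 := by
  set r := (∏ j, s j) ^ ((1 : ℝ) / N)
  have hprod : 0 < ∏ j, s j := Finset.prod_pos fun j _ => hs j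
  have hr : 0 < r := by positivity
  have hrN : r ^ N = ∏ j, s j := by
    simpa [r, one_div] using Real.rpow_inv_natCast_pow hprod.le hN.ne'
  obtain ⟨U, hU, hR⟩ := hasRyshkovConj_diagonal_of_prod_eq_one
    (d := fun j => (s j / r) ^ 2) (fun j => pow_pos (div_pos (hs j) hr) 2) (by
      rw [Finset.prod_pow, Finset.prod_div_distrib, Finset.prod_const, Finset.card_fin, hrN,
        div_self hprod.ne', one_pow])
  have hG' : Uᵀ * diagonal (fun j => (s j / r) ^ 2) * U ∈ RyshkovOne N :=
    ⟨by simp [IsSymm, transpose_mul, Matrix.mul_assoc], hR⟩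
  refine ⟨_, hG', (orthInf_le (posSemidef_of_mem_ryshkovOne hG') hU).trans_eq ?_⟩
  have hUUt : U * Uᵀ = 1 := mul_eq_one_comm.mp hU
  simp only [Matrix.mul_assoc, ← Matrix.mul_assoc U Uᵀ, hUUt, Matrix.one_mul, Matrix.mul_one]
  rw [diagonal_mul_diagonal, trace_diagonal]
  calc ∑ j, 1 / s j ^ 2 * (s j / r) ^ 2 = ∑ _j : Fin N, 1 / r ^ 2 :=
        Finset.sum_congr rfl fun j _ => by field_simp [(hs j).ne']
    _ = N / r ^ 2 := by simp [div_eq_mul_inv]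

end OrthInf

/-- trace bound for the optimal Gram matrix. If `G ∈ R₁`
minimizes `h(G) = inf_U tr(S⁻² U G Uᵀ)` over `R₁`, then
`tr(G) ≤ N (s₁ / (det S)^{1/N})²`. -/
theorem optimal_gram_trace_bound (N : ℕ) (hN : 0 < N)
    (s : Fin N → ℝ) (hs : ∀ j, 0 < s j) (hs_mono : Antitone s)
    (G : Matrix (Fin N) (Fin N) ℝ) (hG : G ∈ RyshkovOne N)
    (hopt : ∀ G' ∈ RyshkovOne N, orthInf s G ≤ orthInf s G') :
    G.trace ≤ (N : ℝ) *
      (s ⟨0, hN⟩ / (∏ j, s j) ^ ((1 : ℝ) / N)) ^ 2 := by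
  obtain ⟨G', hG', hupper⟩ := exists_mem_ryshkovOne_orthInf_le hN hs
  have hbound := (trace_div_sq_le_orthInf hN hs hs_mono (posSemidef_of_mem_ryshkovOne hG)).trans
    ((hopt G' hG').trans hupper)
  rw [div_le_iff₀ (pow_pos (hs _) 2)] at hbound
  calc G.trace ≤ N / ((∏ j, s j) ^ ((1 : ℝ) / N)) ^ 2 * s ⟨0, hN⟩ ^ 2 := hbound
    _ = _ := by ring
end

section
/- The optimum is attained at an extreme point: let S be a real N×N diagonal matrix with positive diagonal entries, define h(G) := inf over orthogonal N×N matrices U of tr(S⁻² U G Uᵀ), and for c ≥ N let C := {G ∈ R₁ : tr(G) ≤ c}. Then C is a nonempty compact convex subset of the real symmetric N×N matrices, and there exists an extreme point G* of C such that h(G*) ≤ h(G) for all G ∈ C; i.e., the concave objective h attains its minimum over C at an extreme point of C. -/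
/-!
The objective `h(G) = inf_U tr(S⁻² U G Uᵀ)` is an infimum of linear functionals of `G`
indexed by the compact set of orthogonal matrices. A joint minimiser `(U₀, G₀)` of
`tr(S⁻² U G Uᵀ)` over `O(N) × C` makes `G₀` a minimiser over `C` of the single linear
functional `G ↦ tr(S⁻² U₀ G U₀ᵀ)`. The face of `C` where that functional is minimal is a
nonempty compact exposed face, so by Krein–Milman it contains an extreme point `G*` of `C`, and
`h(G*) ≤ tr(S⁻² U₀ G* U₀ᵀ) ≤ tr(S⁻² U₀ G₀ U₀ᵀ) ≤ h(G)` for every `G ∈ C`.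
Compactness of `C` comes from the test vectors `eᵢ` and `eᵢ ± eⱼ`, which give `1 ≤ Gᵢᵢ`
and `2 |Gᵢⱼ| ≤ Gᵢᵢ + Gⱼⱼ`.
-/

open Matrix

open Set

section ExtremeMinimizer

variable {E : Type*} [AddCommGroup E] [Module ℝ E] [TopologicalSpace E] [T2Space E]
  [IsTopologicalAddGroup E] [ContinuousSMul ℝ E] [LocallyConvexSpace ℝ E] {C : Set E}

theorem IsCompact.exists_mem_extremePoints_isMinOn (hC : IsCompact C) (hne : C.Nonempty)
    (l : StrongDual ℝ E) : ∃ x ∈ C.extremePoints ℝ, IsMinOn l C x := by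
  obtain ⟨x₀, hx₀, hmin⟩ := hC.exists_isMinOn hne l.continuous.continuousOn
  have hface : IsExposed ℝ C ((-l).toExposed C) := ContinuousLinearMap.toExposed.isExposed
  obtain ⟨x, hx⟩ := (hface.isCompact hC).extremePoints_nonempty
    ⟨x₀, hx₀, fun y hy => by simpa using hmin hy⟩
  exact ⟨x, hface.isExtreme.extremePoints_subset_extremePoints hx,
    fun y hy => by simpa using hx.1.2 y hy⟩

theorem IsCompact.exists_mem_extremePoints_isMinOn_sInf_image {F : Type*} [TopologicalSpace F]
    {O : Set F} (hC : IsCompact C) (hCne : C.Nonempty) (hO : IsCompact O) (hOne : O.Nonempty)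
    (L : F → StrongDual ℝ E) (hL : Continuous fun p : F × E => L p.1 p.2) :
    ∃ x ∈ C.extremePoints ℝ, IsMinOn (fun x => sInf ((L · x) '' O)) C x := by
  obtain ⟨⟨u₀, x₀⟩, ⟨hu₀, hx₀⟩, hmin⟩ :=
    (hO.prod hC).exists_isMinOn (hOne.prod hCne) hL.continuousOn
  have hlower : ∀ y ∈ C, ∀ u ∈ O, L u₀ x₀ ≤ L u y := fun y hy u hu =>
    hmin (mk_mem_prod hu hy)
  obtain ⟨x, hx, hxmin⟩ := hC.exists_mem_extremePoints_isMinOn hCne (L u₀)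
  refine ⟨x, hx, fun y hy => ?_⟩
  calc sInf ((L · x) '' O) ≤ L u₀ x :=
        csInf_le ⟨L u₀ x₀, forall_mem_image.2 (hlower x hx.1)⟩ (mem_image_of_mem _ hu₀)
    _ ≤ L u₀ x₀ := hxmin hx₀
    _ ≤ sInf ((L · y) '' O) := le_csInf (hOne.image _) (forall_mem_image.2 (hlower y hy))

end ExtremeMinimizer

theorem isCompact_setOf_transpose_mul_self_eq_one {n : Type*} [Fintype n] [DecidableEq n] :
    IsCompact {U : Matrix n n ℝ | Uᵀ * U = 1} := by
  refine (isCompact_Icc (a := -1) (b := 1)).matrix.of_isClosed_subset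
    (isClosed_eq (continuous_id.matrix_transpose.matrix_mul continuous_id) continuous_const) ?_
  intro U hU i j
  have hunitary : U ∈ unitaryGroup n ℝ := by
    rwa [mem_unitaryGroup_iff', star_eq_conjTranspose, conjTranspose_eq_transpose_of_trivial]
  exact abs_le.mp (entry_norm_bound_of_unitary hunitary i j)

def Matrix.traceMulMulCLM {n R : Type*} [Fintype n] [CommRing R] [TopologicalSpace R]
    [IsTopologicalRing R] (A B : Matrix n n R) : Matrix n n R →L[R] R where
  toFun G := (A * G * B).trace
  map_add' G H := by simp [mul_add, add_mul, trace_add]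
  map_smul' a G := by simp [trace_smul]
  cont := by fun_prop

@[simp]
theorem Matrix.traceMulMulCLM_apply {n R : Type*} [Fintype n] [CommRing R] [TopologicalSpace R]
    [IsTopologicalRing R] (A B G : Matrix n n R) : traceMulMulCLM A B G = (A * G * B).trace :=
  rfl

instance Matrix.locallyConvexSpace {m n 𝕜 E : Type*} [Semiring 𝕜] [PartialOrder 𝕜]
    [AddCommMonoid E] [TopologicalSpace E] [Module 𝕜 E] [LocallyConvexSpace 𝕜 E] :
    LocallyConvexSpace 𝕜 (Matrix m n E) :=
  Pi.locallyConvexSpace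

section IntQuadForm

variable {N : ℕ}

theorem isLinearMap_intQuadForm (e : Fin N → ℤ) :
    IsLinearMap ℝ fun G : Matrix (Fin N) (Fin N) ℝ => intQuadForm G e where
  map_add G H := by simp [intQuadForm, add_mulVec, dotProduct_add]
  map_smul a G := by simp [intQuadForm, smul_mulVec, dotProduct_smul]

theorem continuous_intQuadForm (e : Fin N → ℤ) :
    Continuous fun G : Matrix (Fin N) (Fin N) ℝ => intQuadForm G e := by
  unfold intQuadForm; fun_prop

theorem one_le_intQuadForm_one {e : Fin N → ℤ} (he : e ≠ 0) : 1 ≤ intQuadForm 1 e := by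
  have hcast : intQuadForm 1 e = ((e ⬝ᵥ e : ℤ) : ℝ) := by simp [intQuadForm, dotProduct]
  have hpos : 0 < e ⬝ᵥ e :=
    (Fintype.sum_nonneg fun i => mul_self_nonneg (e i)).lt_of_ne'
      (dotProduct_self_eq_zero.not.mpr he)
  rw [hcast]
  exact_mod_cast hpos

theorem intQuadForm_single_add_single (G : Matrix (Fin N) (Fin N) ℝ) (i j : Fin N) (a b : ℤ) :
    intQuadForm G (Pi.single i a + Pi.single j b) =
      a ^ 2 * G i i + a * b * (G i j + G j i) + b ^ 2 * G j j := by
  have hcast : (fun k => ((Pi.single i a + Pi.single j b : Fin N → ℤ) k : ℝ)) =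
      Pi.single i (a : ℝ) + Pi.single j (b : ℝ) := by
    ext k; simp only [Pi.add_apply, Pi.single_apply]; split_ifs <;> simp
  simp only [intQuadForm, hcast, mulVec_add, add_dotProduct, dotProduct_add, mulVec_single,
    single_dotProduct, Pi.smul_apply, col_apply, MulOpposite.smul_eq_mul_unop, MulOpposite.unop_op]
  ring

theorem intQuadForm_single (G : Matrix (Fin N) (Fin N) ℝ) (i : Fin N) :
    intQuadForm G (Pi.single i 1) = G i i := by
  simpa using intQuadForm_single_add_single G i i 1 0

end IntQuadForm

section Ryshkov

variable {N : ℕ}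

theorem ryshkovOne_eq :
    RyshkovOne N = {G | G.IsSymm} ∩ ⋂ e ≠ 0, {G | 1 ≤ intQuadForm G e} := by
  ext G; simp [RyshkovOne]

theorem one_mem_ryshkovOne : (1 : Matrix (Fin N) (Fin N) ℝ) ∈ RyshkovOne N :=
  ⟨isSymm_one, fun _ he => one_le_intQuadForm_one he⟩

theorem convex_ryshkovOne : Convex ℝ (RyshkovOne N) := by
  rw [ryshkovOne_eq]
  refine Convex.inter (fun G hG H hH a b _ _ _ => (hG.smul a).add (hH.smul b)) ?_
  exact convex_iInter₂ fun e _ => convex_halfSpace_ge (isLinearMap_intQuadForm e) 1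

theorem isClosed_ryshkovOne : IsClosed (RyshkovOne N) := by
  rw [ryshkovOne_eq]
  refine (isClosed_eq continuous_id.matrix_transpose continuous_id).inter ?_
  exact isClosed_biInter fun e _ => isClosed_le continuous_const (continuous_intQuadForm e)

variable {G : Matrix (Fin N) (Fin N) ℝ}

theorem one_le_diag_of_mem_ryshkovOne (hG : G ∈ RyshkovOne N) (i : Fin N) : 1 ≤ G i i := by
  simpa [intQuadForm_single] using hG.2 (Pi.single i 1) (by simp)

theorem diag_le_trace_of_mem_ryshkovOne (hG : G ∈ RyshkovOne N) (i : Fin N) : G i i ≤ G.trace :=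
  Finset.single_le_sum (fun k _ => zero_le_one.trans (one_le_diag_of_mem_ryshkovOne hG k))
    (Finset.mem_univ i)

theorem two_mul_abs_le_of_mem_ryshkovOne (hG : G ∈ RyshkovOne N) (i j : Fin N) :
    2 * |G i j| ≤ G i i + G j j := by
  obtain rfl | hij := eq_or_ne i j
  · have := one_le_diag_of_mem_ryshkovOne hG i
    rw [abs_of_pos (by linarith)]; linarith
  have hne (b : ℤ) : (Pi.single i 1 + Pi.single j b : Fin N → ℤ) ≠ 0 := fun h => by
    simpa [hij] using congrFun h i
  have hplus := hG.2 _ (hne 1)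
  have hminus := hG.2 _ (hne (-1))
  simp only [intQuadForm_single_add_single, hG.1.apply i j] at hplus hminus
  push_cast at hplus hminus
  rw [mul_comm, ← le_div_iff₀ two_pos, abs_le]
  constructor <;> linarith

theorem abs_le_trace_of_mem_ryshkovOne (hG : G ∈ RyshkovOne N) (i j : Fin N) :
    |G i j| ≤ G.trace := by
  linarith [two_mul_abs_le_of_mem_ryshkovOne hG i j, diag_le_trace_of_mem_ryshkovOne hG i,
    diag_le_trace_of_mem_ryshkovOne hG j]

end Ryshkov

theorem convex_ryshkovOne_sep_trace_le {N : ℕ} (c : ℝ) :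
    Convex ℝ {G ∈ RyshkovOne N | G.trace ≤ c} :=
  convex_ryshkovOne.inter (convex_halfSpace_le (traceLinearMap (Fin N) ℝ ℝ).isLinear c)

theorem isCompact_ryshkovOne_sep_trace_le {N : ℕ} (c : ℝ) :
    IsCompact {G ∈ RyshkovOne N | G.trace ≤ c} := by
  refine (isCompact_Icc (a := -c) (b := c)).matrix.of_isClosed_subset
    (isClosed_ryshkovOne.inter (isClosed_le continuous_id.matrix_trace continuous_const)) ?_
  rintro G ⟨hG, htr⟩ i j
  exact abs_le.mp ((abs_le_trace_of_mem_ryshkovOne hG i j).trans htr)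

theorem optimum_at_extreme_point_general (N : ℕ) (s : Fin N → ℝ)
    (c : ℝ) (hc : (N : ℝ) ≤ c) :
    (({G ∈ RyshkovOne N | G.trace ≤ c} : Set (Matrix (Fin N) (Fin N) ℝ)).Nonempty ∧
      IsCompact {G ∈ RyshkovOne N | G.trace ≤ c} ∧
      Convex ℝ {G ∈ RyshkovOne N | G.trace ≤ c}) ∧
    ∃ Gstar ∈ ({G ∈ RyshkovOne N | G.trace ≤ c} : Set (Matrix (Fin N) (Fin N) ℝ)).extremePoints ℝ,
      ∀ G ∈ {G ∈ RyshkovOne N | G.trace ≤ c}, orthInf s Gstar ≤ orthInf s G := by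
  have hne : ({G ∈ RyshkovOne N | G.trace ≤ c} : Set (Matrix (Fin N) (Fin N) ℝ)).Nonempty :=
    ⟨1, one_mem_ryshkovOne, by simpa using hc⟩
  have hcompact := isCompact_ryshkovOne_sep_trace_le (N := N) c
  refine ⟨⟨hne, hcompact, convex_ryshkovOne_sep_trace_le c⟩, ?_⟩
  -- `orthInf s` is definitionally the infimum of the functionals `traceMulMulCLM (S⁻² U) Uᵀ`.
  obtain ⟨G, hG, hmin⟩ := hcompact.exists_mem_extremePoints_isMinOn_sInf_image hne
    isCompact_setOf_transpose_mul_self_eq_one ⟨1, by simp⟩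
    (fun U => traceMulMulCLM (diagonal (fun j => 1 / s j ^ 2) * U) Uᵀ)
    (by simp only [traceMulMulCLM_apply]; fun_prop)
  exact ⟨G, hG, isMinOn_iff.mp hmin⟩

/-- the optimum is attained at an extreme point. The truncated
Ryshkov polytope `C = {G ∈ R₁ : tr G ≤ c}` (with `c ≥ N`) is a nonempty compact
convex set, and the concave objective `h` attains its minimum over `C` at an
extreme point of `C`. -/
theorem optimum_at_extreme_point (N : ℕ) (s : Fin N → ℝ) (hs : ∀ j, 0 < s j)
    (c : ℝ) (hc : (N : ℝ) ≤ c) :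
    (({G ∈ RyshkovOne N | G.trace ≤ c} : Set (Matrix (Fin N) (Fin N) ℝ)).Nonempty ∧
      IsCompact {G ∈ RyshkovOne N | G.trace ≤ c} ∧
      Convex ℝ {G ∈ RyshkovOne N | G.trace ≤ c}) ∧
    ∃ Gstar ∈ ({G ∈ RyshkovOne N | G.trace ≤ c} : Set (Matrix (Fin N) (Fin N) ℝ)).extremePoints ℝ,
      ∀ G ∈ {G ∈ RyshkovOne N | G.trace ≤ c}, orthInf s Gstar ≤ orthInf s G :=
  optimum_at_extreme_point_general N s c hc
end
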